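/- For p = 1, the vector field X₄ = t∂_x + ∂_u + (s₁kt + x/2)(iψ∂_ψ − iψ̄∂_{ψ̄}) generates a one-parameter symmetry group of the system u_t + s₁uu_x + u_{xxx} + s₂(|ψ|²)_x = 0, iψ_t + ψ_{xx} + kuψ = 0: for every ε ∈ ℝ, if (u, ψ) solves the system then so does (ũ, ψ̃) defined by ũ(t,x) = u(t, x − εt) + ε and ψ̃(t,x) = exp(i(ε(kt + x/2) − ε²t/4))·ψ(t, x − εt), when s₁ = 1. -/

import Mathlib

open Complex Function

variable {E : Type*} [NormedAddCommGroup E] [NormedSpace ℝ E]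

noncomputable def pd (f : ℝ × ℝ → E) : ℝ × ℝ → E := fun p => fderiv ℝ f p (0, 1)
noncomputable def td (f : ℝ × ℝ → E) : ℝ × ℝ → E := fun p => fderiv ℝ f p (1, 0)

lemma pd_contDiff {f : ℝ × ℝ → E} (hf : ContDiff ℝ (⊤ : ℕ∞) f) : ContDiff ℝ (⊤ : ℕ∞) (pd f) :=
  (hf.fderiv_right (by simp)).clm_apply contDiff_const

lemma hasDerivAt_snd {f : ℝ × ℝ → E} (hf : ContDiff ℝ (⊤ : ℕ∞) f) (t x : ℝ) :
    HasDerivAt (fun z => f (t, z)) (pd f (t, x)) x := by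
  have h := (hf.differentiable (by simp) (t, x)).hasFDerivAt.comp_hasDerivAt x
    ((hasDerivAt_const x t).prodMk (hasDerivAt_id x))
  exact h

lemma hasDerivAt_fst {f : ℝ × ℝ → E} (hf : ContDiff ℝ (⊤ : ℕ∞) f) (t x : ℝ) :
    HasDerivAt (fun τ => f (τ, x)) (td f (t, x)) t := by
  have h := (hf.differentiable (by simp) (t, x)).hasFDerivAt.comp_hasDerivAt t
    ((hasDerivAt_id t).prodMk (hasDerivAt_const t x))
  exact h

lemma hasDerivAt_snd_shift {f : ℝ × ℝ → E} (hf : ContDiff ℝ (⊤ : ℕ∞) f) (t x c : ℝ) :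
    HasDerivAt (fun z => f (t, z - c)) (pd f (t, x - c)) x := by
  have hin : HasDerivAt (fun z : ℝ => z - c) 1 x := by
    simpa using (hasDerivAt_id x).sub_const c
  have h := (hasDerivAt_snd hf t (x - c)).scomp x hin
  simpa [Function.comp_def] using h

lemma hasDerivAt_boost {f : ℝ × ℝ → E} (hf : ContDiff ℝ (⊤ : ℕ∞) f) (ε t x : ℝ) :
    HasDerivAt (fun τ => f (τ, x - ε * τ))
      (td f (t, x - ε * t) - ε • pd f (t, x - ε * t)) t := by
  have hc : HasDerivAt (fun τ : ℝ => (τ, x - ε * τ)) ((1 : ℝ), -ε) t := by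
    have h2 : HasDerivAt (fun τ : ℝ => x - ε * τ) (-ε) t := by
      simpa using ((hasDerivAt_id t).const_mul ε).const_sub x
    exact (hasDerivAt_id t).prodMk h2
  have h := (hf.differentiable (by simp) (t, x - ε * t)).hasFDerivAt.comp_hasDerivAt t hc
  have hv : fderiv ℝ f (t, x - ε * t) ((1 : ℝ), -ε)
      = td f (t, x - ε * t) - ε • pd f (t, x - ε * t) := by
    have h1 : ((1 : ℝ), -ε) = ((1 : ℝ), (0 : ℝ)) - ε • ((0 : ℝ), (1 : ℝ)) := by
      simp [Prod.ext_iff]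
    rw [h1, map_sub, map_smul]; rfl
  rw [hv] at h
  exact h

/-- Galilean boost invariance of the KdV–Schrödinger system (p = 1, s₁ = 1). -/
theorem galilean_boost_symmetry
    (s₁ s₂ k : ℝ) (hs₁ : s₁ = 1) (hs₂ : s₂ = 1 ∨ s₂ = -1) (hk : k ≠ 0) (ε : ℝ)
    (u : ℝ → ℝ → ℝ) (ψ : ℝ → ℝ → ℂ)
    (hu : ContDiff ℝ (⊤ : ℕ∞) (Function.uncurry u)) (hψ : ContDiff ℝ (⊤ : ℕ∞) (Function.uncurry ψ))
    (heq1 : ∀ t x, deriv (fun τ => u τ x) t + s₁ * u t x * deriv (u t) x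
      + iteratedDeriv 3 (u t) x + s₂ * deriv (fun y => Complex.normSq (ψ t y)) x = 0)
    (heq2 : ∀ t x, Complex.I * deriv (fun τ => ψ τ x) t
      + iteratedDeriv 2 (ψ t) x + (k : ℂ) * (u t x : ℂ) * ψ t x = 0)
    (u' : ℝ → ℝ → ℝ) (ψ' : ℝ → ℝ → ℂ)
    (hu' : ∀ t x, u' t x = u t (x - ε * t) + ε)
    (hψ' : ∀ t x, ψ' t x
      = Complex.exp (Complex.I * ((ε : ℂ) * ((k : ℂ) * t + (x : ℂ)/2)
          - (ε : ℂ)^2 * (t : ℂ)/4)) * ψ t (x - ε * t)) :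
    (∀ t x, deriv (fun τ => u' τ x) t + s₁ * u' t x * deriv (u' t) x
      + iteratedDeriv 3 (u' t) x + s₂ * deriv (fun y => Complex.normSq (ψ' t y)) x = 0)
    ∧ (∀ t x, Complex.I * deriv (fun τ => ψ' τ x) t
      + iteratedDeriv 2 (ψ' t) x + (k : ℂ) * (u' t x : ℂ) * ψ' t x = 0) := by
  subst hs₁
  set G := Function.uncurry u with hGdef
  set F := Function.uncurry ψ with hFdef
  -- rewriting of the hypotheses in terms of partial derivatives
  have hux : ∀ a b, deriv (u a) b = pd G (a, b) := fun a b => (hasDerivAt_snd hu a b).deriv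
  have huxf : ∀ a, deriv (u a) = fun z => pd G (a, z) := fun a => funext fun z => hux a z
  have hu3 : ∀ a b, iteratedDeriv 3 (u a) b = pd (pd (pd G)) (a, b) := by
    intro a b
    rw [show (3 : ℕ) = 2 + 1 from rfl, iteratedDeriv_succ,
      show (2 : ℕ) = 1 + 1 from rfl, iteratedDeriv_succ, iteratedDeriv_one, huxf a,
      funext fun z => (hasDerivAt_snd (pd_contDiff hu) a z).deriv]
    exact (hasDerivAt_snd (pd_contDiff (pd_contDiff hu)) a b).deriv
  have hpx : ∀ a b, deriv (ψ a) b = pd F (a, b) := fun a b => (hasDerivAt_snd hψ a b).deriv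
  have hp2 : ∀ a b, iteratedDeriv 2 (ψ a) b = pd (pd F) (a, b) := by
    intro a b
    rw [show (2 : ℕ) = 1 + 1 from rfl, iteratedDeriv_succ, iteratedDeriv_one,
      funext fun z => hpx a z]
    exact (hasDerivAt_snd (pd_contDiff hψ) a b).deriv
  have H1 : ∀ a b, td G (a, b) + u a b * pd G (a, b) + pd (pd (pd G)) (a, b)
      + s₂ * deriv (fun z => Complex.normSq (ψ a z)) b = 0 := by
    intro a b
    have h := heq1 a b
    have hut : deriv (fun τ => u τ b) a = td G (a, b) := (hasDerivAt_fst hu a b).deriv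
    rw [hut, hux, hu3] at h
    linarith [h]
  have H2 : ∀ a b, Complex.I * td F (a, b) + pd (pd F) (a, b)
      + (k : ℂ) * (u a b : ℂ) * ψ a b = 0 := by
    intro a b
    have h := heq2 a b
    have hpt : deriv (fun τ => ψ τ b) a = td F (a, b) := (hasDerivAt_fst hψ a b).deriv
    rwa [hpt, hp2] at h
  constructor
  · -- KdV equation for u'
    intro t x
    have hu't : deriv (fun τ => u' τ x) t
        = td G (t, x - ε * t) - ε * pd G (t, x - ε * t) := by
      have h : HasDerivAt (fun τ => u τ (x - ε * τ) + ε)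
          (td G (t, x - ε * t) - ε • pd G (t, x - ε * t)) t := by
        exact (hasDerivAt_boost hu ε t x).add_const ε
      rw [funext fun τ => hu' τ x]
      simpa [smul_eq_mul] using h.deriv
    have hu'xf : ∀ a, deriv (u' a) = fun z => pd G (a, z - ε * a) := by
      intro a; funext z
      have h : HasDerivAt (fun w => u a (w - ε * a) + ε) (pd G (a, z - ε * a)) z :=
        (hasDerivAt_snd_shift hu a z (ε * a)).add_const ε
      rw [show u' a = fun w => u a (w - ε * a) + ε from funext fun w => hu' a w]
      exact h.deriv
    have hu'3 : iteratedDeriv 3 (u' t) x = pd (pd (pd G)) (t, x - ε * t) := by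
      rw [show (3 : ℕ) = 2 + 1 from rfl, iteratedDeriv_succ,
        show (2 : ℕ) = 1 + 1 from rfl, iteratedDeriv_succ, iteratedDeriv_one, hu'xf t,
        funext fun z => (hasDerivAt_snd_shift (pd_contDiff hu) t z (ε * t)).deriv]
      exact (hasDerivAt_snd_shift (pd_contDiff (pd_contDiff hu)) t x (ε * t)).deriv
    have hns : (fun z => Complex.normSq (ψ' t z))
        = fun z => Complex.normSq (ψ t (z - ε * t)) := by
      funext z
      rw [hψ' t z, Complex.normSq_mul]
      have harg : Complex.I * ((ε : ℂ) * ((k : ℂ) * t + (z : ℂ)/2)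
          - (ε : ℂ)^2 * (t : ℂ)/4)
          = ((ε * (k * t + z/2) - ε^2 * t/4 : ℝ) : ℂ) * Complex.I := by
        push_cast; ring
      have hre : (Complex.I * ((ε : ℂ) * ((k : ℂ) * t + (z : ℂ)/2)
          - (ε : ℂ)^2 * (t : ℂ)/4)).re = 0 := by
        rw [harg, Complex.mul_I_re, Complex.ofReal_im, neg_zero]
      rw [Complex.normSq_eq_norm_sq, Complex.norm_exp, hre, Real.exp_zero, one_pow, one_mul]
    have hNd : deriv (fun z => Complex.normSq (ψ' t z)) x
        = deriv (fun z => Complex.normSq (ψ t z)) (x - ε * t) := by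
      rw [hns]
      exact deriv_comp_sub_const (fun w => Complex.normSq (ψ t w)) (ε * t) x
    rw [hu't, hu'xf t, hu'3, hNd, hu' t x]
    have h := H1 t (x - ε * t)
    linarith [h]
  · -- Schrödinger equation for ψ'
    intro t x
    -- phase function derivatives
    set P : ℝ → ℝ → ℂ := fun a b => Complex.exp (Complex.I * ((ε : ℂ) * ((k : ℂ) * a + (b : ℂ)/2)
        - (ε : ℂ)^2 * (a : ℂ)/4)) with hPdef
    have hPt : HasDerivAt (fun τ => P τ x)
        (Complex.I * ((ε : ℂ) * (k : ℂ) - (ε : ℂ)^2/4) * P t x) t := by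
      have h1 := Complex.ofRealCLM.hasDerivAt (x := t)
      have h2 : HasDerivAt (fun τ : ℝ => Complex.I * ((ε : ℂ) * ((k : ℂ) * (τ : ℂ) + (x : ℂ)/2)
          - (ε : ℂ)^2 * (τ : ℂ)/4)) (Complex.I * ((ε : ℂ) * (k : ℂ) - (ε : ℂ)^2/4)) t := by
        have h3 := ((((h1.const_mul (k : ℂ)).add_const ((x : ℂ)/2)).const_mul (ε : ℂ)).sub
          ((h1.const_mul ((ε : ℂ)^2)).div_const 4)).const_mul Complex.I
        exact h3.congr_deriv (by simp only [Complex.ofRealCLM_apply, Complex.ofReal_one]; ring)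
      simpa [hPdef, mul_comm] using h2.cexp
    have hPx : ∀ z : ℝ, HasDerivAt (fun w => P t w) (Complex.I * (ε : ℂ)/2 * P t z) z := by
      intro z
      have h1 := Complex.ofRealCLM.hasDerivAt (x := z)
      have h2 : HasDerivAt (fun w : ℝ => Complex.I * ((ε : ℂ) * ((k : ℂ) * (t : ℂ) + (w : ℂ)/2)
          - (ε : ℂ)^2 * (t : ℂ)/4)) (Complex.I * (ε : ℂ)/2) z := by
        have h3 := (((h1.div_const 2).const_add ((k : ℂ) * (t : ℂ))).const_mul (ε : ℂ)).sub_const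
          ((ε : ℂ)^2 * (t : ℂ)/4) |>.const_mul Complex.I
        exact h3.congr_deriv (by simp only [Complex.ofRealCLM_apply, Complex.ofReal_one]; ring)
      simpa [hPdef, mul_comm] using h2.cexp
    have hψt : ψ' t = fun z => P t z * ψ t (z - ε * t) := funext fun z => hψ' t z
    -- time derivative
    have e1 : deriv (fun τ => ψ' τ x) t
        = Complex.I * ((ε : ℂ) * (k : ℂ) - (ε : ℂ)^2/4) * P t x * ψ t (x - ε * t)
          + P t x * (td F (t, x - ε * t) - (ε : ℂ) * pd F (t, x - ε * t)) := by
      have hb := hasDerivAt_boost hψ ε t x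
      rw [Complex.real_smul] at hb
      rw [funext fun τ => hψ' τ x]
      exact (hPt.mul hb).deriv
    -- first spatial derivative as a function
    have hD1 : deriv (ψ' t) = fun z => Complex.I * (ε : ℂ)/2 * P t z * ψ t (z - ε * t)
        + P t z * pd F (t, z - ε * t) := by
      funext z
      have h := (hPx z).mul (hasDerivAt_snd_shift hψ t z (ε * t))
      rw [hψt]
      exact h.deriv
    have e2 : iteratedDeriv 2 (ψ' t) x
        = Complex.I * (ε : ℂ)/2 * (Complex.I * (ε : ℂ)/2 * P t x) * ψ t (x - ε * t)
          + Complex.I * (ε : ℂ)/2 * P t x * pd F (t, x - ε * t)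
          + (Complex.I * (ε : ℂ)/2 * P t x * pd F (t, x - ε * t)
            + P t x * pd (pd F) (t, x - ε * t)) := by
      rw [show (2 : ℕ) = 1 + 1 from rfl, iteratedDeriv_succ, iteratedDeriv_one, hD1]
      have ha : HasDerivAt (fun z => Complex.I * (ε : ℂ)/2 * P t z * ψ t (z - ε * t))
          (Complex.I * (ε : ℂ)/2 * (Complex.I * (ε : ℂ)/2 * P t x) * ψ t (x - ε * t)
            + Complex.I * (ε : ℂ)/2 * P t x * pd F (t, x - ε * t)) x :=
        ((hPx x).const_mul (Complex.I * (ε : ℂ)/2)).mul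
          (hasDerivAt_snd_shift hψ t x (ε * t))
      have hb : HasDerivAt (fun z => P t z * pd F (t, z - ε * t))
          (Complex.I * (ε : ℂ)/2 * P t x * pd F (t, x - ε * t)
            + P t x * pd (pd F) (t, x - ε * t)) x :=
        (hPx x).mul (hasDerivAt_snd_shift (pd_contDiff hψ) t x (ε * t))
      exact (ha.add hb).deriv
    rw [e1, e2, hψ' t x, hu' t x]
    have h := H2 t (x - ε * t)
    push_cast
    linear_combination (P t x) * h
      + (ε : ℂ) * (k : ℂ) * P t x * ψ t (x - ε * t) * Complex.I_sq
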